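/- arXiv:2212.02956 — 6 statements merged into one kernel-verified Lean document; each statement's English description precedes it below -/
import Mathlib

section
/- A closed B-isotropic subspace L = graph′(u) of a super Hilbert space V, where u : V⁺ → V⁻ is a partial isometry, satisfies ΓL = L^⊥ (i.e., L is a Lagrangian) if and only if u is unitary. -/
noncomputable section

open Submodule ContinuousLinearMap

/-- Build an element of the `L²`-product from its two components. -/
abbrev p2 {α β : Type*} [AddCommGroup α] [Module ℝ α] [AddCommGroup β] [Module ℝ β]
    (a : α) (b : β) : WithLp 2 (α × β) :=
  (WithLp.linearEquiv 2 ℝ (α × β)).symm (a, b)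

/-- The `L²`-product as a linear equiv with the plain product. -/
abbrev unL2 {α β : Type*} [AddCommGroup α] [Module ℝ α] [AddCommGroup β] [Module ℝ β] :
    WithLp 2 (α × β) →ₗ[ℝ] α × β :=
  (WithLp.linearEquiv 2 ℝ (α × β)).toLinearMap

abbrev mkL2 {α β : Type*} [AddCommGroup α] [Module ℝ α] [AddCommGroup β] [Module ℝ β] :
    (α × β) →ₗ[ℝ] WithLp 2 (α × β) :=
  ((WithLp.linearEquiv 2 ℝ (α × β)).symm : (α × β) ≃ₗ[ℝ] WithLp 2 (α × β)).toLinearMap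

section Defs

variable {Vp Vm : Type*} [NormedAddCommGroup Vp] [InnerProductSpace ℝ Vp]
  [NormedAddCommGroup Vm] [InnerProductSpace ℝ Vm]

/-- The grading operator `Γ` on the super Hilbert space `V = Vp ⊕ Vm` (`Γ = 1` on `V⁺ = Vp`,
`Γ = -1` on `V⁻ = Vm`). -/
def sGrading : WithLp 2 (Vp × Vm) →ₗ[ℝ] WithLp 2 (Vp × Vm) :=
  mkL2 ∘ₗ ((LinearMap.fst ℝ Vp Vm).prod (-(LinearMap.snd ℝ Vp Vm))) ∘ₗ unL2

/-- `L` is isotropic for the form `B(x, y) = ⟪J x, y⟫`. -/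
def IsIsotropicWith {W : Type*} [NormedAddCommGroup W] [InnerProductSpace ℝ W]
    (J : W →ₗ[ℝ] W) (L : Submodule ℝ W) : Prop :=
  ∀ x ∈ L, ∀ y ∈ L, (inner ℝ (J x) y : ℝ) = 0

/-- `L` is a Lagrangian with respect to the grading `J`, i.e. `J L = Lᗮ`. -/
def IsLagrangianWith {W : Type*} [NormedAddCommGroup W] [InnerProductSpace ℝ W]
    (J : W →ₗ[ℝ] W) (L : Submodule ℝ W) : Prop :=
  L.map J = Lᗮ

/-- `L ⊆ V = Vp ⊕ Vm` is `B`-isotropic, where `B(x,y) = ⟪Γ x, y⟫`. -/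
def IsIsotropic (L : Submodule ℝ (WithLp 2 (Vp × Vm))) : Prop :=
  IsIsotropicWith sGrading L

/-- The image `Γ L` of a subspace under the grading operator. -/
def gradingMap (L : Submodule ℝ (WithLp 2 (Vp × Vm))) : Submodule ℝ (WithLp 2 (Vp × Vm)) :=
  L.map sGrading

/-- `L` is a Lagrangian in the super Hilbert space `Vp ⊕ Vm`: `Γ L = Lᗮ`. -/
def IsLagrangian (L : Submodule ℝ (WithLp 2 (Vp × Vm))) : Prop :=
  IsLagrangianWith sGrading L

/-- The restricted graph `graph′(u) = graph(u) ∩ (ker u)ᗮ` of `u : V⁺ → V⁻`, inside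
`V = Vp ⊕ Vm`. -/
def graphPI (u : Vp →L[ℝ] Vm) : Submodule ℝ (WithLp 2 (Vp × Vm)) :=
  (LinearMap.ker (u : Vp →ₗ[ℝ] Vm))ᗮ.map (mkL2 ∘ₗ (LinearMap.id : Vp →ₗ[ℝ] Vp).prod u.toLinearMap)

/-- The full graph `graph(u) = {(x, u x)}` of `u : V⁺ → V⁻`, inside `V = Vp ⊕ Vm`. -/
def graphFull (u : Vp →ₗ[ℝ] Vm) : Submodule ℝ (WithLp 2 (Vp × Vm)) :=
  (⊤ : Submodule ℝ Vp).map (mkL2 ∘ₗ (LinearMap.id : Vp →ₗ[ℝ] Vp).prod u)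

/-- The restricted graph of an operator `w : V⁻ → V⁺`, viewed inside `V = Vp ⊕ Vm`
via `y ↦ (w y, y)`. -/
def graphPIrev (w : Vm →L[ℝ] Vp) : Submodule ℝ (WithLp 2 (Vp × Vm)) :=
  (LinearMap.ker (w : Vm →ₗ[ℝ] Vp))ᗮ.map (mkL2 ∘ₗ w.toLinearMap.prod (LinearMap.id : Vm →ₗ[ℝ] Vm))

/-- `u` is a partial isometry: it is isometric on `(ker u)ᗮ`. -/
def IsPartialIsometry (u : Vp →L[ℝ] Vm) : Prop :=
  ∀ x ∈ (LinearMap.ker (u : Vp →ₗ[ℝ] Vm))ᗮ, ‖u x‖ = ‖x‖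

/-- `u` is unitary: a surjective isometry. -/
def IsUnitaryOp {E F : Type*} [NormedAddCommGroup E] [InnerProductSpace ℝ E]
    [NormedAddCommGroup F] [InnerProductSpace ℝ F] (u : E →L[ℝ] F) : Prop :=
  (∀ x, ‖u x‖ = ‖x‖) ∧ Function.Surjective u

end Defs

section CorrDefs

variable {Ap Am Bp Bm : Type*} [NormedAddCommGroup Ap] [InnerProductSpace ℝ Ap]
  [NormedAddCommGroup Am] [InnerProductSpace ℝ Am]
  [NormedAddCommGroup Bp] [InnerProductSpace ℝ Bp]
  [NormedAddCommGroup Bm] [InnerProductSpace ℝ Bm]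

/-- The grading `Γ(x₀, x₁) = (-Γ₀ x₀, Γ₁ x₁)` on `Π V₀ ⊕ V₁`, where `V₀ = Ap ⊕ Am` and
`V₁ = Bp ⊕ Bm`. -/
def corrGrading :
    WithLp 2 (WithLp 2 (Ap × Am) × WithLp 2 (Bp × Bm)) →ₗ[ℝ]
      WithLp 2 (WithLp 2 (Ap × Am) × WithLp 2 (Bp × Bm)) :=
  mkL2 ∘ₗ ((-(sGrading : WithLp 2 (Ap × Am) →ₗ[ℝ] WithLp 2 (Ap × Am))).prodMap
    (sGrading : WithLp 2 (Bp × Bm) →ₗ[ℝ] WithLp 2 (Bp × Bm))) ∘ₗ unL2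

/-- `L` is a Lagrangian correspondence from `V₀ = Ap ⊕ Am` to `V₁ = Bp ⊕ Bm`, i.e. a
Lagrangian in `Π V₀ ⊕ V₁`. -/
def IsLagCorr (L : Submodule ℝ (WithLp 2 (WithLp 2 (Ap × Am) × WithLp 2 (Bp × Bm)))) : Prop :=
  IsLagrangianWith corrGrading L

/-- `L` is `B`-isotropic in `Π V₀ ⊕ V₁`. -/
def IsIsotropicCorr (L : Submodule ℝ (WithLp 2 (WithLp 2 (Ap × Am) × WithLp 2 (Bp × Bm)))) :
    Prop :=
  IsIsotropicWith corrGrading L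

/-- The graph of a map `u : (ΠV₀ ⊕ V₁)⁺ = V₀⁻ ⊕ V₁⁺ → V₀⁺ ⊕ V₁⁻ = (ΠV₀ ⊕ V₁)⁻`, as a linear
map into `ΠV₀ ⊕ V₁`; an element `(b, c)` is sent to `((u(b,c)₁, b), (c, u(b,c)₂))`. -/
def corrGraphMap (u : WithLp 2 (Am × Bp) →L[ℝ] WithLp 2 (Ap × Bm)) :
    WithLp 2 (Am × Bp) →ₗ[ℝ] WithLp 2 (WithLp 2 (Ap × Am) × WithLp 2 (Bp × Bm)) :=
  mkL2 ∘ₗ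
    ((mkL2 ∘ₗ (((LinearMap.fst ℝ Ap Bm) ∘ₗ unL2 ∘ₗ u.toLinearMap).prod
        ((LinearMap.fst ℝ Am Bp) ∘ₗ unL2))).prod
      (mkL2 ∘ₗ (((LinearMap.snd ℝ Am Bp) ∘ₗ unL2).prod
        ((LinearMap.snd ℝ Ap Bm) ∘ₗ unL2 ∘ₗ u.toLinearMap))))

/-- The graph of `u : (ΠV₀ ⊕ V₁)⁺ → (ΠV₀ ⊕ V₁)⁻` as a subspace of `ΠV₀ ⊕ V₁`. -/
def corrGraph (u : WithLp 2 (Am × Bp) →L[ℝ] WithLp 2 (Ap × Bm)) :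
    Submodule ℝ (WithLp 2 (WithLp 2 (Ap × Am) × WithLp 2 (Bp × Bm))) :=
  LinearMap.range (corrGraphMap u)

end CorrDefs

section Comp

variable {W0 W1 W2 : Type*} [NormedAddCommGroup W0] [InnerProductSpace ℝ W0]
  [NormedAddCommGroup W1] [InnerProductSpace ℝ W1]
  [NormedAddCommGroup W2] [InnerProductSpace ℝ W2]

/-- The composition `L₁₂ ∘ L₀₁ = {(x₀, x₂) | ∃ x₁, (x₀, x₁) ∈ L₀₁ ∧ (x₁, x₂) ∈ L₁₂}` of two
correspondences `L₀₁ ⊆ W0 ⊕ W1` and `L₁₂ ⊆ W1 ⊕ W2`. -/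
def compCorr (L01 : Submodule ℝ (WithLp 2 (W0 × W1))) (L12 : Submodule ℝ (WithLp 2 (W1 × W2))) :
    Submodule ℝ (WithLp 2 (W0 × W2)) :=
  Submodule.map
    (mkL2 ∘ₗ
      (((LinearMap.fst ℝ W0 W1 ∘ₗ unL2) ∘ₗ
          LinearMap.fst ℝ (WithLp 2 (W0 × W1)) (WithLp 2 (W1 × W2))).prod
        ((LinearMap.snd ℝ W1 W2 ∘ₗ unL2) ∘ₗ
          LinearMap.snd ℝ (WithLp 2 (W0 × W1)) (WithLp 2 (W1 × W2)))))
    ((L01.prod L12) ⊓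
      LinearMap.ker
        (((LinearMap.snd ℝ W0 W1 ∘ₗ unL2) ∘ₗ
            LinearMap.fst ℝ (WithLp 2 (W0 × W1)) (WithLp 2 (W1 × W2))) -
          ((LinearMap.fst ℝ W1 W2 ∘ₗ unL2) ∘ₗ
            LinearMap.snd ℝ (WithLp 2 (W0 × W1)) (WithLp 2 (W1 × W2)))))

end Comp

/-- `u` is a Hilbert–Schmidt operator: `∑ ‖u eᵢ‖²` converges for every Hilbert basis. -/
def IsHilbertSchmidt {E F : Type*} [NormedAddCommGroup E] [InnerProductSpace ℝ E]
    [NormedAddCommGroup F] [InnerProductSpace ℝ F] (u : E →L[ℝ] F) : Prop :=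
  ∀ (ι : Type) (b : HilbertBasis ι ℝ E), Summable fun i => ‖u (b i)‖ ^ 2

/-!
Since `Γ` is an involution, `Γ L = Lᗮ` says that `z ∈ Lᗮ ↔ Γ z ∈ L`. For `L = graph′(u)`, the
vectors `(k, 0)` with `k ∈ ker u` and `(0, c)` with `c ⊥ range u` lie in `Lᗮ`, and `Γ` of them lies
in `L` only if `k = 0` and `c = 0`. So a Lagrangian `graph′(u)` forces `u` to be injective, hence
isometric, with dense range; the range of an isometry on a complete space is closed, so `u` is
onto. Conversely, if `u` is unitary then `u` preserves inner products and `(a, u y) ⊥ graph(u)`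
exactly when `a = -y`, i.e. when `Γ (a, u y) = (a, -u y)` lies in `graph(u)`.
-/

theorem LinearIsometry.surjective_of_orthogonal_range_eq_bot {𝕜 E F : Type*} [RCLike 𝕜]
    [NormedAddCommGroup E] [InnerProductSpace 𝕜 E] [CompleteSpace E]
    [NormedAddCommGroup F] [InnerProductSpace 𝕜 F] (f : E →ₗᵢ[𝕜] F)
    (h : (LinearMap.range f.toLinearMap)ᗮ = ⊥) : Function.Surjective f := by
  have : CompleteSpace (LinearMap.range f.toLinearMap) :=
    f.isometry.isUniformInducing.isComplete_range.completeSpace_coe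
  exact LinearMap.range_eq_top.1 (Submodule.orthogonal_eq_bot_iff.1 h)

theorem isLagrangianWith_iff_of_involutive {W : Type*} [NormedAddCommGroup W]
    [InnerProductSpace ℝ W] {J : W →ₗ[ℝ] W} (hJ : Function.Involutive J) {L : Submodule ℝ W} :
    IsLagrangianWith J L ↔ ∀ z, z ∈ Lᗮ ↔ J z ∈ L := by
  have mem_map : ∀ z, z ∈ L.map J ↔ J z ∈ L := fun z =>
    ⟨by rintro ⟨w, hw, rfl⟩; rwa [hJ w], fun h => ⟨J z, h, hJ z⟩⟩
  simp only [IsLagrangianWith, SetLike.ext_iff, mem_map, Iff.comm]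

section SuperHilbert

variable {Vp Vm : Type*} [NormedAddCommGroup Vp] [InnerProductSpace ℝ Vp]
  [NormedAddCommGroup Vm] [InnerProductSpace ℝ Vm] {u : Vp →L[ℝ] Vm}

theorem p2_fst_snd (z : WithLp 2 (Vp × Vm)) : p2 z.fst z.snd = z := rfl

theorem sGrading_p2 (a : Vp) (b : Vm) : sGrading (p2 a b) = p2 a (-b) := rfl

theorem sGrading_involutive : Function.Involutive (sGrading : WithLp 2 (Vp × Vm) → _) :=
  fun z => by rw [← p2_fst_snd z, sGrading_p2, sGrading_p2, neg_neg]

theorem isLagrangian_iff {L : Submodule ℝ (WithLp 2 (Vp × Vm))} :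
    IsLagrangian L ↔ ∀ a b, p2 a b ∈ Lᗮ ↔ p2 a (-b) ∈ L := by
  rw [IsLagrangian, isLagrangianWith_iff_of_involutive sGrading_involutive]
  exact ⟨fun h a b => h (p2 a b), fun h z => h z.fst z.snd⟩

theorem p2_mem_graphPI_iff {a : Vp} {b : Vm} :
    p2 a b ∈ graphPI u ↔ a ∈ (LinearMap.ker (u : Vp →ₗ[ℝ] Vm))ᗮ ∧ u a = b := by
  simp [graphPI]

theorem p2_mem_orthogonal_graphPI_iff {a : Vp} {b : Vm} :
    p2 a b ∈ (graphPI u)ᗮ ↔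
      ∀ x ∈ (LinearMap.ker (u : Vp →ₗ[ℝ] Vm))ᗮ, (inner ℝ x a + inner ℝ (u x) b : ℝ) = 0 := by
  simp [Submodule.mem_orthogonal, graphPI]

theorem IsPartialIsometry.norm_map_of_ker_eq_bot (hu : IsPartialIsometry u)
    (hker : LinearMap.ker (u : Vp →ₗ[ℝ] Vm) = ⊥) (x : Vp) : ‖u x‖ = ‖x‖ :=
  hu x (by simp [hker])

theorem IsLagrangian.ker_eq_bot_of_graphPI (h : IsLagrangian (graphPI u)) :
    LinearMap.ker (u : Vp →ₗ[ℝ] Vm) = ⊥ := by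
  refine (Submodule.eq_bot_iff _).2 fun k hk => ?_
  have hperp : p2 k 0 ∈ (graphPI u)ᗮ := p2_mem_orthogonal_graphPI_iff.2 fun x hx => by
    simp [Submodule.inner_left_of_mem_orthogonal hk hx]
  obtain ⟨hk', -⟩ := p2_mem_graphPI_iff.1 ((isLagrangian_iff.1 h k 0).1 hperp)
  exact inner_self_eq_zero.1 (Submodule.inner_right_of_mem_orthogonal hk hk')

theorem IsLagrangian.orthogonal_range_eq_bot_of_graphPI (h : IsLagrangian (graphPI u)) :
    (LinearMap.range (u : Vp →ₗ[ℝ] Vm))ᗮ = ⊥ := by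
  refine (Submodule.eq_bot_iff _).2 fun c hc => ?_
  have hperp : p2 0 c ∈ (graphPI u)ᗮ := p2_mem_orthogonal_graphPI_iff.2 fun x _ => by
    rw [inner_zero_right, zero_add]
    exact Submodule.inner_right_of_mem_orthogonal (LinearMap.mem_range_self _ x) hc
  obtain ⟨-, hc0⟩ := p2_mem_graphPI_iff.1 ((isLagrangian_iff.1 h 0 c).1 hperp)
  simpa using hc0

theorem IsUnitaryOp.isLagrangian_graphPI (hu : IsUnitaryOp u) : IsLagrangian (graphPI u) := by
  obtain ⟨hn, hsurj⟩ := hu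
  let f : Vp →ₗᵢ[ℝ] Vm := ⟨u, hn⟩
  have hinj : Function.Injective u := f.injective
  have hker : LinearMap.ker (u : Vp →ₗ[ℝ] Vm) = ⊥ := LinearMap.ker_eq_bot.2 hinj
  refine isLagrangian_iff.2 fun a b => ?_
  obtain ⟨y, rfl⟩ := hsurj b
  have hinner (x : Vp) : (inner ℝ (u x) (u y) : ℝ) = inner ℝ x y := f.inner_map_map x y
  simp only [p2_mem_orthogonal_graphPI_iff, p2_mem_graphPI_iff, hker,
    Submodule.bot_orthogonal_eq_top, Submodule.mem_top, true_implies, true_and,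
    hinner, ← inner_add_right, ← map_neg, hinj.eq_iff, eq_neg_iff_add_eq_zero]
  exact ⟨fun h => inner_self_eq_zero.1 (h _), fun h x => by rw [h, inner_zero_right]⟩

end SuperHilbert

theorem graphPI_lagrangian_iff_unitary_general
    {Vp Vm : Type*} [NormedAddCommGroup Vp] [InnerProductSpace ℝ Vp] [CompleteSpace Vp]
    [NormedAddCommGroup Vm] [InnerProductSpace ℝ Vm]
    (u : Vp →L[ℝ] Vm) (hu : IsPartialIsometry u) :
    IsLagrangian (graphPI u) ↔ IsUnitaryOp u := by
  refine ⟨fun h => ?_, IsUnitaryOp.isLagrangian_graphPI⟩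
  have hn := hu.norm_map_of_ker_eq_bot h.ker_eq_bot_of_graphPI
  let f : Vp →ₗᵢ[ℝ] Vm := ⟨u, hn⟩
  exact ⟨hn, f.surjective_of_orthogonal_range_eq_bot h.orthogonal_range_eq_bot_of_graphPI⟩

/-- The closed `B`-isotropic subspace `L = graph′(u)` is a Lagrangian
(`Γ L = Lᗮ`) if and only if the partial isometry `u` is unitary. -/
theorem graphPI_lagrangian_iff_unitary
    {Vp Vm : Type*} [NormedAddCommGroup Vp] [InnerProductSpace ℝ Vp] [CompleteSpace Vp]
    [NormedAddCommGroup Vm] [InnerProductSpace ℝ Vm] [CompleteSpace Vm]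
    (u : Vp →L[ℝ] Vm) (hu : IsPartialIsometry u) :
    IsLagrangian (graphPI u) ↔ IsUnitaryOp u :=
  graphPI_lagrangian_iff_unitary_general u hu
end
end

section
/- A closed B-isotropic subspace L = graph′(u) of a super Hilbert space V, with u : V⁺ → V⁻ a partial isometry, is a sub-Lagrangian (i.e., L + ΓL has finite codimension in V) if and only if u is a Fredholm operator. -/
noncomputable section

open Submodule ContinuousLinearMap

/-! The sum `L + ΓL` consists of the pairs `(x + y, u x - u y)` with `x, y ⊥ ker u`, so it is
`(ker u)ᗮ × u((ker u)ᗮ) = (ker u)ᗮ × range u`. Hence `V ⧸ (L + ΓL) ≅ ker u × coker u`, while the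
range of a partial isometry is automatically closed, being an isometric image of the complete
space `(ker u)ᗮ`. -/

theorem Module.finite_prod_iff {R M N : Type*} [Semiring R] [AddCommMonoid M] [Module R M]
    [AddCommMonoid N] [Module R N] :
    Module.Finite R (M × N) ↔ Module.Finite R M ∧ Module.Finite R N :=
  ⟨fun _ => ⟨.of_surjective (LinearMap.fst R M N) LinearMap.fst_surjective,
    .of_surjective (LinearMap.snd R M N) LinearMap.snd_surjective⟩,
   fun ⟨_, _⟩ => inferInstance⟩

def Submodule.quotientProdEquiv {R M N : Type*} [Ring R] [AddCommGroup M] [Module R M]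
    [AddCommGroup N] [Module R N] (p : Submodule R M) (q : Submodule R N) :
    ((M × N) ⧸ p.prod q) ≃ₗ[R] (M ⧸ p) × (N ⧸ q) :=
  (Submodule.quotEquivOfEq _ _ (by rw [LinearMap.ker_prodMap, ker_mkQ, ker_mkQ])).trans
    (LinearMap.quotKerEquivOfSurjective (p.mkQ.prodMap q.mkQ)
      (Prod.map_surjective.mpr ⟨p.mkQ_surjective, q.mkQ_surjective⟩))

theorem LinearMap.map_orthogonal_ker {𝕜 E F : Type*} [RCLike 𝕜] [NormedAddCommGroup E]
    [InnerProductSpace 𝕜 E] [AddCommGroup F] [Module 𝕜 F] (f : E →ₗ[𝕜] F)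
    [(LinearMap.ker f).HasOrthogonalProjection] :
    (LinearMap.ker f)ᗮ.map f = LinearMap.range f := by
  rw [LinearMap.range_eq_map,
    ← Submodule.sup_orthogonal_of_hasOrthogonalProjection (K := LinearMap.ker f),
    Submodule.map_sup, LinearMap.le_ker_iff_map.mp le_rfl, bot_sup_eq]

section GradedGraph

variable {Vp Vm : Type*} [NormedAddCommGroup Vp] [InnerProductSpace ℝ Vp]
  [NormedAddCommGroup Vm] [InnerProductSpace ℝ Vm]

theorem IsPartialIsometry.isClosed_range [CompleteSpace Vp] {u : Vp →L[ℝ] Vm}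
    (hu : IsPartialIsometry u) :
    IsClosed ((LinearMap.range (u : Vp →ₗ[ℝ] Vm) : Submodule ℝ Vm) : Set Vm) := by
  set K := (LinearMap.ker (u : Vp →ₗ[ℝ] Vm))ᗮ
  have : CompleteSpace K := (Submodule.isClosed_orthogonal _).completeSpace_coe
  let f : K →ₗᵢ[ℝ] Vm := ⟨u.toLinearMap ∘ₗ K.subtype, fun x => hu x x.2⟩
  have hf : Set.range f = LinearMap.range (u : Vp →ₗ[ℝ] Vm) := by
    rw [← LinearMap.map_orthogonal_ker, Submodule.map_coe]
    exact (Set.image_eq_range _ _).symm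
  exact hf ▸ f.isometry.isClosedEmbedding.isClosed_range

/-- Every `(a, u c)` with `a, c ⊥ ker u` splits as `(x, u x) + Γ (y, u y)` with
`x = (a + c) / 2`, `y = (a - c) / 2`. -/
theorem graphPI_sup_gradingMap (u : Vp →L[ℝ] Vm) :
    graphPI u ⊔ gradingMap (graphPI u) =
      ((LinearMap.ker (u : Vp →ₗ[ℝ] Vm))ᗮ.prod
        ((LinearMap.ker (u : Vp →ₗ[ℝ] Vm))ᗮ.map (u : Vp →ₗ[ℝ] Vm))).map
        (mkL2 : (Vp × Vm) →ₗ[ℝ] WithLp 2 (Vp × Vm)) := by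
  set K := (LinearMap.ker (u : Vp →ₗ[ℝ] Vm))ᗮ
  apply le_antisymm
  · refine sup_le ?_ ?_
    · rintro _ ⟨x, hx, rfl⟩
      exact ⟨(x, u x), ⟨hx, x, hx, rfl⟩, rfl⟩
    · rintro _ ⟨_, ⟨x, hx, rfl⟩, rfl⟩
      exact ⟨(x, -u x), ⟨hx, -x, K.neg_mem hx, map_neg u x⟩, rfl⟩
  · rintro _ ⟨⟨a, _⟩, ⟨ha, c, hc, rfl⟩, rfl⟩
    set x : Vp := (2 : ℝ)⁻¹ • (a + c)
    set y : Vp := (2 : ℝ)⁻¹ • (a - c)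
    refine Submodule.mem_sup.mpr ⟨mkL2 (x, u x), ⟨x, K.smul_mem _ (K.add_mem ha hc), rfl⟩,
      mkL2 (y, -u y), ⟨mkL2 (y, u y), ⟨y, K.smul_mem _ (K.sub_mem ha hc), rfl⟩, rfl⟩, ?_⟩
    rw [← map_add, Prod.mk_add_mk, ← map_neg, ← map_add]
    have hx : x + y = a := by module
    have hy : x + -y = c := by module
    rw [hx, hy]
    rfl

def quotientGraphPISupEquiv (u : Vp →L[ℝ] Vm) :
    (WithLp 2 (Vp × Vm) ⧸ (graphPI u ⊔ gradingMap (graphPI u))) ≃ₗ[ℝ]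
      (Vp ⧸ (LinearMap.ker (u : Vp →ₗ[ℝ] Vm))ᗮ) ×
        (Vm ⧸ (LinearMap.ker (u : Vp →ₗ[ℝ] Vm))ᗮ.map (u : Vp →ₗ[ℝ] Vm)) :=
  (Submodule.Quotient.equiv _ _ (WithLp.linearEquiv 2 ℝ (Vp × Vm))
    (by rw [graphPI_sup_gradingMap, ← Submodule.map_comp]; exact Submodule.map_id _)).trans
    (Submodule.quotientProdEquiv _ _)

end GradedGraph

theorem graphPI_subLagrangian_iff_fredholm_general
    {Vp Vm : Type*} [NormedAddCommGroup Vp] [InnerProductSpace ℝ Vp] [CompleteSpace Vp]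
    [NormedAddCommGroup Vm] [InnerProductSpace ℝ Vm]
    (u : Vp →L[ℝ] Vm) (hu : IsPartialIsometry u) :
    FiniteDimensional ℝ (WithLp 2 (Vp × Vm) ⧸ (graphPI u ⊔ gradingMap (graphPI u))) ↔
      (FiniteDimensional ℝ (LinearMap.ker (u : Vp →ₗ[ℝ] Vm)) ∧
        FiniteDimensional ℝ (Vm ⧸ LinearMap.range (u : Vp →ₗ[ℝ] Vm)) ∧
        IsClosed ((LinearMap.range (u : Vp →ₗ[ℝ] Vm) : Submodule ℝ Vm) : Set Vm)) := by
  have hker : IsCompl (LinearMap.ker (u : Vp →ₗ[ℝ] Vm))ᗮ (LinearMap.ker (u : Vp →ₗ[ℝ] Vm)) :=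
    (Submodule.isCompl_orthogonal _).symm
  unfold FiniteDimensional
  rw [Module.Finite.equiv_iff (quotientGraphPISupEquiv u), Module.finite_prod_iff,
    Module.Finite.equiv_iff (Submodule.quotientEquivOfIsCompl _ _ hker),
    LinearMap.map_orthogonal_ker, and_iff_left hu.isClosed_range]

/-- The closed `B`-isotropic subspace `L = graph′(u)` is a sub-Lagrangian
(`L + ΓL` has finite codimension) if and only if `u` is Fredholm. -/
theorem graphPI_subLagrangian_iff_fredholm
    {Vp Vm : Type*} [NormedAddCommGroup Vp] [InnerProductSpace ℝ Vp] [CompleteSpace Vp]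
    [NormedAddCommGroup Vm] [InnerProductSpace ℝ Vm] [CompleteSpace Vm]
    (u : Vp →L[ℝ] Vm) (hu : IsPartialIsometry u) :
    FiniteDimensional ℝ (WithLp 2 (Vp × Vm) ⧸ (graphPI u ⊔ gradingMap (graphPI u))) ↔
      (FiniteDimensional ℝ (LinearMap.ker (u : Vp →ₗ[ℝ] Vm)) ∧
        FiniteDimensional ℝ (Vm ⧸ LinearMap.range (u : Vp →ₗ[ℝ] Vm)) ∧
        IsClosed ((LinearMap.range (u : Vp →ₗ[ℝ] Vm) : Submodule ℝ Vm) : Set Vm)) :=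
  graphPI_subLagrangian_iff_fredholm_general u hu
end
end

section
/- Let L = graph(u) be a Lagrangian in ΠV₀ ⊕ V₁ in general position, where u is the unitary from (ΠV₀ ⊕ V₁)⁺ = V₀⁻ ⊕ V₁⁺ to (ΠV₀ ⊕ V₁)⁻ = V₀⁺ ⊕ V₁⁻ with matrix entries u₀₀, u₀₁, u₁₀, u₁₁. Then the off-diagonal components u₀₁ : V₁⁺ → V₀⁺ and u₁₀ : V₀⁻ → V₁⁻ both have trivial kernel and dense range. -/
noncomputable section

open Submodule ContinuousLinearMap

/-- The full graph of a bounded operator `S : E → F`, inside `E ⊕ F`. -/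
def graphFullCorr {E F : Type*} [NormedAddCommGroup E] [InnerProductSpace ℝ E]
    [NormedAddCommGroup F] [InnerProductSpace ℝ F] (S : E →L[ℝ] F) :
    Submodule ℝ (WithLp 2 (E × F)) :=
  (⊤ : Submodule ℝ E).map (mkL2 ∘ₗ (LinearMap.id : E →ₗ[ℝ] E).prod S.toLinearMap)

/- In general position the graph meets neither `V₀ ⊕ 0` nor `0 ⊕ V₁`; the graph
points over `(x, 0)` and `(0, y)` then show that `u₁₀` and `u₀₁` are injective. For density, let
`y ⊥ range u₀₁` and write `(y, 0) = u w`. As `u` preserves inner products, `w ⊥ 0 ⊕ V₁⁺`, so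
`w = (w₀, 0)` with `u₁₀ w₀ = 0`; injectivity of `u₁₀` gives `w = 0`, hence `y = 0`. The case of
`u₁₀` is symmetric. -/

theorem IsUnitaryOp.inner_map_map {E F : Type*} [NormedAddCommGroup E] [InnerProductSpace ℝ E]
    [NormedAddCommGroup F] [InnerProductSpace ℝ F] {u : E →L[ℝ] F} (hu : IsUnitaryOp u)
    (x y : E) : (inner ℝ (u x) (u y) : ℝ) = inner ℝ x y :=
  (LinearIsometry.mk u.toLinearMap hu.1).inner_map_map x y

theorem denseRange_of_forall_inner_eq_zero {E F : Type*} [NormedAddCommGroup E]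
    [InnerProductSpace ℝ E] [NormedAddCommGroup F] [InnerProductSpace ℝ F] [CompleteSpace F]
    (f : E →L[ℝ] F) (h : ∀ y, (∀ x, (inner ℝ (f x) y : ℝ) = 0) → y = 0) : DenseRange f := by
  have hperp : (LinearMap.range (f : E →ₗ[ℝ] F))ᗮ = ⊥ :=
    (Submodule.eq_bot_iff _).mpr fun y hy => h y fun x => hy _ (LinearMap.mem_range_self _ x)
  simpa [DenseRange, LinearMap.coe_range] using
    Submodule.dense_iff_topologicalClosure_eq_top.mpr
      (Submodule.topologicalClosure_eq_top_iff.mpr hperp)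

section CorrGraph

variable {Ap Am Bp Bm : Type*} [NormedAddCommGroup Ap] [InnerProductSpace ℝ Ap]
  [NormedAddCommGroup Am] [InnerProductSpace ℝ Am]
  [NormedAddCommGroup Bp] [InnerProductSpace ℝ Bp]
  [NormedAddCommGroup Bm] [InnerProductSpace ℝ Bm]
  {u : WithLp 2 (Am × Bp) →L[ℝ] WithLp 2 (Ap × Bm)}

theorem corrGraphMap_fst (x : WithLp 2 (Am × Bp)) :
    (corrGraphMap u x).fst = p2 (u x).fst x.fst :=
  rfl

theorem corrGraphMap_snd (x : WithLp 2 (Am × Bp)) :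
    (corrGraphMap u x).snd = p2 x.snd (u x).snd :=
  rfl

theorem eq_zero_of_snd_apply_inl_eq_zero (hgen : ∀ p ∈ corrGraph u, p.snd = 0 → p = 0)
    {x : Am} (hx : (u (p2 x 0)).snd = 0) : x = 0 := by
  have hp : corrGraphMap u (p2 x 0) = 0 :=
    hgen _ (LinearMap.mem_range_self _ _) (by rw [corrGraphMap_snd, hx]; rfl)
  simpa [corrGraphMap_fst] using congrArg (fun p => p.fst.snd) hp

theorem eq_zero_of_fst_apply_inr_eq_zero (hgen : ∀ p ∈ corrGraph u, p.fst = 0 → p = 0)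
    {y : Bp} (hy : (u (p2 0 y)).fst = 0) : y = 0 := by
  have hp : corrGraphMap u (p2 0 y) = 0 :=
    hgen _ (LinearMap.mem_range_self _ _) (by rw [corrGraphMap_fst, hy]; rfl)
  simpa [corrGraphMap_snd] using congrArg (fun p => p.snd.fst) hp

theorem eq_zero_of_forall_inner_fst_apply_inr (hu : IsUnitaryOp u)
    (hinj : ∀ x : Am, (u (p2 x 0)).snd = 0 → x = 0) {y : Ap}
    (hy : ∀ c : Bp, (inner ℝ (u (p2 0 c)).fst y : ℝ) = 0) : y = 0 := by
  obtain ⟨w, hw⟩ := hu.2 (p2 y 0)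
  have hw_snd : w.snd = 0 := by
    refine inner_self_eq_zero (𝕜 := ℝ) |>.mp ?_
    calc (inner ℝ w.snd w.snd : ℝ) = inner ℝ (p2 0 w.snd) w := by
          rw [WithLp.prod_inner_apply]; simp
      _ = inner ℝ (u (p2 0 w.snd)) (u w) := (hu.inner_map_map _ _).symm
      _ = inner ℝ (u (p2 0 w.snd)).fst y + inner ℝ (u (p2 0 w.snd)).snd (0 : Bm) := by
          rw [hw, WithLp.prod_inner_apply]; rfl
      _ = 0 := by rw [hy, inner_zero_right, add_zero]
  have hw_eq : w = p2 w.fst 0 := by rw [← hw_snd]; rfl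
  have hw_fst : w.fst = 0 := hinj _ (by rw [← hw_eq, hw]; rfl)
  have : p2 y (0 : Bm) = 0 := by rw [← hw, hw_eq, hw_fst]; exact map_zero u
  simpa using congrArg WithLp.fst this

theorem eq_zero_of_forall_inner_snd_apply_inl (hu : IsUnitaryOp u)
    (hinj : ∀ y : Bp, (u (p2 0 y)).fst = 0 → y = 0) {z : Bm}
    (hz : ∀ b : Am, (inner ℝ (u (p2 b 0)).snd z : ℝ) = 0) : z = 0 := by
  obtain ⟨w, hw⟩ := hu.2 (p2 0 z)
  have hw_fst : w.fst = 0 := by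
    refine inner_self_eq_zero (𝕜 := ℝ) |>.mp ?_
    calc (inner ℝ w.fst w.fst : ℝ) = inner ℝ (p2 w.fst 0) w := by
          rw [WithLp.prod_inner_apply]; simp
      _ = inner ℝ (u (p2 w.fst 0)) (u w) := (hu.inner_map_map _ _).symm
      _ = inner ℝ (u (p2 w.fst 0)).fst (0 : Ap) + inner ℝ (u (p2 w.fst 0)).snd z := by
          rw [hw, WithLp.prod_inner_apply]; rfl
      _ = 0 := by rw [hz, inner_zero_right, zero_add]
  have hw_eq : w = p2 0 w.snd := by rw [← hw_fst]; rfl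
  have hw_snd : w.snd = 0 := hinj _ (by rw [← hw_eq, hw]; rfl)
  have : p2 (0 : Ap) z = 0 := by rw [← hw, hw_eq, hw_snd]; exact map_zero u
  simpa using congrArg WithLp.snd this

end CorrGraph

theorem offdiagonal_blocks_injective_dense_range_general
    {V0p V0m V1p V1m : Type*}
    [NormedAddCommGroup V0p] [InnerProductSpace ℝ V0p] [CompleteSpace V0p]
    [NormedAddCommGroup V0m] [InnerProductSpace ℝ V0m]
    [NormedAddCommGroup V1p] [InnerProductSpace ℝ V1p]
    [NormedAddCommGroup V1m] [InnerProductSpace ℝ V1m] [CompleteSpace V1m]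
    (u : WithLp 2 (V0m × V1p) →L[ℝ] WithLp 2 (V0p × V1m))
    (u00 : V0m →L[ℝ] V0p) (u01 : V1p →L[ℝ] V0p) (u10 : V0m →L[ℝ] V1m) (u11 : V1p →L[ℝ] V1m)
    (hblocks : ∀ x : WithLp 2 (V0m × V1p),
      u x = p2 (u00 x.fst + u01 x.snd) (u10 x.fst + u11 x.snd))
    (huni : IsUnitaryOp u)
    (hgen1 : ∀ p ∈ corrGraph u, p.snd = 0 → p = 0)
    (hgen2 : ∀ p ∈ corrGraph u, p.fst = 0 → p = 0) :
    (∀ x, u01 x = 0 → x = 0) ∧ Dense (Set.range fun x => u01 x) ∧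
      (∀ x, u10 x = 0 → x = 0) ∧ Dense (Set.range fun x => u10 x) := by
  have hinl : ∀ x : V0m, (u (p2 x 0)).snd = u10 x := fun x => by
    rw [hblocks]; simp
  have hinr : ∀ y : V1p, (u (p2 0 y)).fst = u01 y := fun y => by
    rw [hblocks]; simp
  have h10 : ∀ x, u10 x = 0 → x = 0 := fun x hx =>
    eq_zero_of_snd_apply_inl_eq_zero hgen1 (hinl x ▸ hx)
  have h01 : ∀ y, u01 y = 0 → y = 0 := fun y hy =>
    eq_zero_of_fst_apply_inr_eq_zero hgen2 (hinr y ▸ hy)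
  refine ⟨h01, denseRange_of_forall_inner_eq_zero u01 fun y hy => ?_, h10,
    denseRange_of_forall_inner_eq_zero u10 fun z hz => ?_⟩
  · exact eq_zero_of_forall_inner_fst_apply_inr huni
      (fun x hx => h10 x (hinl x ▸ hx)) (fun c => hinr c ▸ hy c)
  · exact eq_zero_of_forall_inner_snd_apply_inl huni
      (fun y hy => h01 y (hinr y ▸ hy)) (fun b => hinl b ▸ hz b)

/-- For a Lagrangian correspondence `L = graph(u)` in general position, the
off-diagonal blocks `u₀₁` and `u₁₀` of the unitary `u` have trivial kernel and dense range. -/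
theorem offdiagonal_blocks_injective_dense_range
    {V0p V0m V1p V1m : Type*}
    [NormedAddCommGroup V0p] [InnerProductSpace ℝ V0p] [CompleteSpace V0p]
    [NormedAddCommGroup V0m] [InnerProductSpace ℝ V0m] [CompleteSpace V0m]
    [NormedAddCommGroup V1p] [InnerProductSpace ℝ V1p] [CompleteSpace V1p]
    [NormedAddCommGroup V1m] [InnerProductSpace ℝ V1m] [CompleteSpace V1m]
    (u : WithLp 2 (V0m × V1p) →L[ℝ] WithLp 2 (V0p × V1m))
    (u00 : V0m →L[ℝ] V0p) (u01 : V1p →L[ℝ] V0p) (u10 : V0m →L[ℝ] V1m) (u11 : V1p →L[ℝ] V1m)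
    (hblocks : ∀ x : WithLp 2 (V0m × V1p),
      u x = p2 (u00 x.fst + u01 x.snd) (u10 x.fst + u11 x.snd))
    (huni : IsUnitaryOp u)
    (hgen1 : ∀ p ∈ corrGraph u, p.snd = 0 → p = 0)
    (hgen2 : ∀ p ∈ corrGraph u, p.fst = 0 → p = 0) :
    (∀ x, u01 x = 0 → x = 0) ∧ Dense (Set.range fun x => u01 x) ∧
      (∀ x, u10 x = 0 → x = 0) ∧ Dense (Set.range fun x => u10 x) :=
  offdiagonal_blocks_injective_dense_range_general u u00 u01 u10 u11 hblocks huni hgen1 hgen2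
end
end

section
/- The composition L₁₂ ∘ L₀₁ = {(x₀, x₂) : ∃ x₁ ∈ V₁ with (x₀,x₁) ∈ L₀₁ and (x₁,x₂) ∈ L₁₂} of two Lagrangian correspondences L₀₁ ⊆ ΠV₀ ⊕ V₁ and L₁₂ ⊆ ΠV₁ ⊕ V₂ is a B-isotropic subspace of ΠV₀ ⊕ V₂. -/
noncomputable section

open Submodule ContinuousLinearMap

/-!
If `(x₀, x₂)` and `(y₀, y₂)` lie in the composition, through middle points `x₁` and `y₁`, then
`B₀₂((x₀, x₂), (y₀, y₂)) = B₀₁((x₀, x₁), (y₀, y₁)) + B₁₂((x₁, x₂), (y₁, y₂))`, because the term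
`⟪Γ₁ x₁, y₁⟫` enters `ΠV₀ ⊕ V₁` and `ΠV₁ ⊕ V₂` with opposite signs. Both summands vanish since a
Lagrangian `L` is isotropic: `Γ L = Lᗮ`.
-/

theorem IsLagrangianWith.isIsotropicWith {W : Type*} [NormedAddCommGroup W]
    [InnerProductSpace ℝ W] {J : W →ₗ[ℝ] W} {L : Submodule ℝ W} (h : IsLagrangianWith J L) :
    IsIsotropicWith J L := by
  intro x hx y hy
  have hJx : J x ∈ Lᗮ := h ▸ mem_map_of_mem hx
  rw [real_inner_comm]
  exact (mem_orthogonal _ _).mp hJx y hy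

section Corr

variable {Ap Am Bp Bm Cp Cm : Type*} [NormedAddCommGroup Ap] [InnerProductSpace ℝ Ap]
  [NormedAddCommGroup Am] [InnerProductSpace ℝ Am]
  [NormedAddCommGroup Bp] [InnerProductSpace ℝ Bp]
  [NormedAddCommGroup Bm] [InnerProductSpace ℝ Bm]
  [NormedAddCommGroup Cp] [InnerProductSpace ℝ Cp]
  [NormedAddCommGroup Cm] [InnerProductSpace ℝ Cm]

theorem inner_corrGrading (x y : WithLp 2 (WithLp 2 (Ap × Am) × WithLp 2 (Bp × Bm))) :
    inner ℝ (corrGrading x) y =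
      -inner ℝ (sGrading x.fst) y.fst + inner ℝ (sGrading x.snd) y.snd := by
  simp [corrGrading, WithLp.prod_inner_apply]

theorem inner_corrGrading_eq_add (x y : WithLp 2 (WithLp 2 (Ap × Am) × WithLp 2 (Cp × Cm)))
    (x₁ y₁ : WithLp 2 (Bp × Bm)) :
    inner ℝ (corrGrading x) y =
      inner ℝ (corrGrading (p2 x.fst x₁)) (p2 y.fst y₁) +
        inner ℝ (corrGrading (p2 x₁ x.snd)) (p2 y₁ y.snd) := by
  simp only [inner_corrGrading, p2, WithLp.coe_symm_linearEquiv, WithLp.toLp_fst,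
    WithLp.toLp_snd]
  ring

end Corr

theorem mem_compCorr {W0 W1 W2 : Type*} [NormedAddCommGroup W0] [InnerProductSpace ℝ W0]
    [NormedAddCommGroup W1] [InnerProductSpace ℝ W1]
    [NormedAddCommGroup W2] [InnerProductSpace ℝ W2]
    {L01 : Submodule ℝ (WithLp 2 (W0 × W1))} {L12 : Submodule ℝ (WithLp 2 (W1 × W2))}
    {x : WithLp 2 (W0 × W2)} :
    x ∈ compCorr L01 L12 ↔ ∃ x₁, p2 x.fst x₁ ∈ L01 ∧ p2 x₁ x.snd ∈ L12 := by
  constructor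
  · rintro ⟨⟨a, b⟩, ⟨⟨ha, hb⟩, hmid⟩, rfl⟩
    have hab : a.snd = b.fst := sub_eq_zero.1 hmid
    exact ⟨a.snd, ha, hab ▸ hb⟩
  · rintro ⟨x₁, h01, h12⟩
    refine ⟨(p2 x.fst x₁, p2 x₁ x.snd), ⟨⟨h01, h12⟩, ?_⟩, ?_⟩
    · simp
    · rfl

/-- The composition of two Lagrangian correspondences
`L₀₁ ⊆ ΠV₀ ⊕ V₁` and `L₁₂ ⊆ ΠV₁ ⊕ V₂` is a `B`-isotropic subspace of `ΠV₀ ⊕ V₂`. -/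
theorem compCorr_isotropic
    {V0p V0m V1p V1m V2p V2m : Type*}
    [NormedAddCommGroup V0p] [InnerProductSpace ℝ V0p]
    [NormedAddCommGroup V0m] [InnerProductSpace ℝ V0m]
    [NormedAddCommGroup V1p] [InnerProductSpace ℝ V1p]
    [NormedAddCommGroup V1m] [InnerProductSpace ℝ V1m]
    [NormedAddCommGroup V2p] [InnerProductSpace ℝ V2p]
    [NormedAddCommGroup V2m] [InnerProductSpace ℝ V2m]
    (L01 : Submodule ℝ (WithLp 2 (WithLp 2 (V0p × V0m) × WithLp 2 (V1p × V1m))))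
    (L12 : Submodule ℝ (WithLp 2 (WithLp 2 (V1p × V1m) × WithLp 2 (V2p × V2m))))
    (h01 : IsLagCorr L01) (h12 : IsLagCorr L12) :
    IsIsotropicCorr (Ap := V0p) (Am := V0m) (Bp := V2p) (Bm := V2m) (compCorr L01 L12) := by
  intro x hx y hy
  obtain ⟨x₁, hx01, hx12⟩ := mem_compCorr.1 hx
  obtain ⟨y₁, hy01, hy12⟩ := mem_compCorr.1 hy
  rw [inner_corrGrading_eq_add x y x₁ y₁, h01.isIsotropicWith _ hx01 _ hy01,
    h12.isIsotropicWith _ hx12 _ hy12, add_zero]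
end
end

section
/- Let L₀₁ = graph(u) ⊆ ΠV₀ ⊕ V₁ and L₁₂ = graph(v) ⊆ ΠV₁ ⊕ V₂ be Lagrangian correspondences given by unitaries u, v with block entries u_{ij}, v_{ij}. If x ∈ V₁⁺ satisfies v₁₁ u₁₁ x = x, then u₀₁ x = 0 and v₂₁ u₁₁ x = 0; similarly, if x ∈ V₁⁻ satisfies u₁₁ v₁₁ x = x, then u₀₁ v₁₁ x = 0 and v₂₁ x = 0. -/
/-! The block columns of an isometry are jointly isometric: `‖u₀₁x‖² + ‖u₁₁x‖² = ‖x‖²`.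
Going once around the loop `x ↦ u₁₁x ↦ v₁₁u₁₁x = x` therefore sheds
`‖u₀₁x‖² + ‖v₂₁u₁₁x‖²` of `‖x‖²` and comes back to `‖x‖²`, so both off-diagonal parts vanish. -/

noncomputable section

open Submodule ContinuousLinearMap

theorem norm_sq_add_norm_sq_of_apply_eq_p2 {E C D : Type*} [SeminormedAddCommGroup E]
    [SeminormedAddCommGroup C] [Module ℝ C] [SeminormedAddCommGroup D] [Module ℝ D]
    {w : E → WithLp 2 (C × D)} (hw : ∀ x, ‖w x‖ = ‖x‖) {x : E} {a : C} {b : D}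
    (h : w x = p2 a b) : ‖a‖ ^ 2 + ‖b‖ ^ 2 = ‖x‖ ^ 2 := by
  rw [← hw x, h, WithLp.prod_norm_sq_eq_of_L2]
  rfl

theorem eq_zero_of_norm_sq_add_of_norm_sq_add {E F G H : Type*} [NormedAddCommGroup E]
    [NormedAddCommGroup F] [SeminormedAddCommGroup G] [SeminormedAddCommGroup H]
    {a : E} {b : F} {x : G} {y : H}
    (hx : ‖a‖ ^ 2 + ‖y‖ ^ 2 = ‖x‖ ^ 2) (hy : ‖x‖ ^ 2 + ‖b‖ ^ 2 = ‖y‖ ^ 2) : a = 0 ∧ b = 0 := by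
  have ha : ‖a‖ ^ 2 = 0 := by nlinarith [sq_nonneg ‖a‖, sq_nonneg ‖b‖]
  have hb : ‖b‖ ^ 2 = 0 := by nlinarith [sq_nonneg ‖a‖, sq_nonneg ‖b‖]
  simp_all

theorem kernel_of_one_sub_composed_diagonal_blocks_general
    {V0p V0m V1p V1m V2p V2m : Type*}
    [NormedAddCommGroup V0p] [InnerProductSpace ℝ V0p]
    [NormedAddCommGroup V0m] [InnerProductSpace ℝ V0m]
    [NormedAddCommGroup V1p] [InnerProductSpace ℝ V1p]
    [NormedAddCommGroup V1m] [InnerProductSpace ℝ V1m]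
    [NormedAddCommGroup V2p] [InnerProductSpace ℝ V2p]
    [NormedAddCommGroup V2m] [InnerProductSpace ℝ V2m]
    (u : WithLp 2 (V0m × V1p) →L[ℝ] WithLp 2 (V0p × V1m))
    (v : WithLp 2 (V1m × V2p) →L[ℝ] WithLp 2 (V1p × V2m))
    (u00 : V0m →L[ℝ] V0p) (u01 : V1p →L[ℝ] V0p) (u10 : V0m →L[ℝ] V1m) (u11 : V1p →L[ℝ] V1m)
    (v11 : V1m →L[ℝ] V1p) (v12 : V2p →L[ℝ] V1p) (v21 : V1m →L[ℝ] V2m) (v22 : V2p →L[ℝ] V2m)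
    (hub : ∀ x : WithLp 2 (V0m × V1p),
      u x = p2 (u00 x.fst + u01 x.snd) (u10 x.fst + u11 x.snd))
    (hvb : ∀ y : WithLp 2 (V1m × V2p),
      v y = p2 (v11 y.fst + v12 y.snd) (v21 y.fst + v22 y.snd))
    (hu : IsUnitaryOp u) (hv : IsUnitaryOp v) :
    (∀ x : V1p, v11 (u11 x) = x → (u01 x = 0 ∧ v21 (u11 x) = 0)) ∧
    (∀ y : V1m, u11 (v11 y) = y → (u01 (v11 y) = 0 ∧ v21 y = 0)) := by
  have hu_col : ∀ x : V1p, ‖u01 x‖ ^ 2 + ‖u11 x‖ ^ 2 = ‖x‖ ^ 2 := fun x => by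
    simpa using norm_sq_add_norm_sq_of_apply_eq_p2 hu.1 (hub (p2 0 x))
  have hv_col : ∀ y : V1m, ‖v11 y‖ ^ 2 + ‖v21 y‖ ^ 2 = ‖y‖ ^ 2 := fun y => by
    simpa using norm_sq_add_norm_sq_of_apply_eq_p2 hv.1 (hvb (p2 y 0))
  refine ⟨fun x hx => ?_, fun y hy => ?_⟩
  · exact eq_zero_of_norm_sq_add_of_norm_sq_add (hu_col x)
      (by simpa only [hx] using hv_col (u11 x))
  · exact eq_zero_of_norm_sq_add_of_norm_sq_add
      (by simpa only [hy] using hu_col (v11 y)) (hv_col y)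

/-- For Lagrangian correspondences `L₀₁ = graph(u)` and `L₁₂ = graph(v)`
given by unitaries with block entries `uᵢⱼ`, `vᵢⱼ`: if `x ∈ V₁⁺` satisfies `v₁₁u₁₁x = x`,
then `u₀₁x = 0` and `v₂₁u₁₁x = 0`; if `x ∈ V₁⁻` satisfies `u₁₁v₁₁x = x`, then
`u₀₁v₁₁x = 0` and `v₂₁x = 0`. -/
theorem kernel_of_one_sub_composed_diagonal_blocks
    {V0p V0m V1p V1m V2p V2m : Type*}
    [NormedAddCommGroup V0p] [InnerProductSpace ℝ V0p] [CompleteSpace V0p]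
    [NormedAddCommGroup V0m] [InnerProductSpace ℝ V0m] [CompleteSpace V0m]
    [NormedAddCommGroup V1p] [InnerProductSpace ℝ V1p] [CompleteSpace V1p]
    [NormedAddCommGroup V1m] [InnerProductSpace ℝ V1m] [CompleteSpace V1m]
    [NormedAddCommGroup V2p] [InnerProductSpace ℝ V2p] [CompleteSpace V2p]
    [NormedAddCommGroup V2m] [InnerProductSpace ℝ V2m] [CompleteSpace V2m]
    (u : WithLp 2 (V0m × V1p) →L[ℝ] WithLp 2 (V0p × V1m))
    (v : WithLp 2 (V1m × V2p) →L[ℝ] WithLp 2 (V1p × V2m))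
    (u00 : V0m →L[ℝ] V0p) (u01 : V1p →L[ℝ] V0p) (u10 : V0m →L[ℝ] V1m) (u11 : V1p →L[ℝ] V1m)
    (v11 : V1m →L[ℝ] V1p) (v12 : V2p →L[ℝ] V1p) (v21 : V1m →L[ℝ] V2m) (v22 : V2p →L[ℝ] V2m)
    (hub : ∀ x : WithLp 2 (V0m × V1p),
      u x = p2 (u00 x.fst + u01 x.snd) (u10 x.fst + u11 x.snd))
    (hvb : ∀ y : WithLp 2 (V1m × V2p),
      v y = p2 (v11 y.fst + v12 y.snd) (v21 y.fst + v22 y.snd))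
    (hu : IsUnitaryOp u) (hv : IsUnitaryOp v) :
    (∀ x : V1p, v11 (u11 x) = x → (u01 x = 0 ∧ v21 (u11 x) = 0)) ∧
    (∀ y : V1m, u11 (v11 y) = y → (u01 (v11 y) = 0 ∧ v21 y = 0)) :=
  kernel_of_one_sub_composed_diagonal_blocks_general u v u00 u01 u10 u11 v11 v12 v21 v22 hub hvb hu
    hv
end
end

section
/- With L₀₁ = graph(u) and L₁₂ = graph(v) Lagrangian correspondences given by unitaries with block entries u_{ij}, v_{ij}, one has ker(1 - v₁₁u₁₁) ⊥ (ran(v₁₂) + ran(v₁₁u₁₀)) and ker(1 - u₁₁v₁₁) ⊥ (ran(u₁₀) + ran(u₁₁v₁₂)). -/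
noncomputable section

open Submodule ContinuousLinearMap

/-!
If `v₁₁ u₁₁ x = x`, the norm of `x` passes unchanged through the column contractions
`x ↦ (u₀₁ x, u₁₁ x)` and `y ↦ (v₁₁ y, v₂₁ y)`, so `u₀₁ x = 0` and `v₂₁ u₁₁ x = 0`. An isometry
whose first output component vanishes at `z` preserves inner products with `z` through its second
component; applied to `v` at `u₁₁ x` and to `u` at `x` this gives
`⟪x, v₁₂ a + v₁₁ u₁₀ b⟫ = ⟪u₁₁ x, u₁₀ b⟫ = ⟪x, 0⟫ = 0`. The second claim is the same argument
for `x = v₁₁ y`.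
-/

section IsometryIntoProd

variable {E C D : Type*} [NormedAddCommGroup E] [InnerProductSpace ℝ E]
  [NormedAddCommGroup C] [InnerProductSpace ℝ C] [NormedAddCommGroup D] [InnerProductSpace ℝ D]
  {T : E →L[ℝ] WithLp 2 (C × D)}

lemma norm_fst_sq_add_norm_snd_sq_of_norm_map (hT : ∀ z, ‖T z‖ = ‖z‖) (z : E) :
    ‖(T z).fst‖ ^ 2 + ‖(T z).snd‖ ^ 2 = ‖z‖ ^ 2 := by
  rw [← WithLp.prod_norm_sq_eq_of_L2, hT]

lemma inner_map_map_of_norm_map (hT : ∀ z, ‖T z‖ = ‖z‖) (z w : E) :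
    (inner ℝ (T z) (T w) : ℝ) = inner ℝ z w :=
  (⟨T.toLinearMap, hT⟩ : E →ₗᵢ[ℝ] WithLp 2 (C × D)).inner_map_map z w

lemma inner_snd_map_of_fst_map_eq_zero (hT : ∀ z, ‖T z‖ = ‖z‖) {z : E} (hz : (T z).fst = 0)
    (w : E) : (inner ℝ (T z).snd (T w).snd : ℝ) = inner ℝ z w := by
  simpa [WithLp.prod_inner_apply, hz] using inner_map_map_of_norm_map hT z w

lemma inner_fst_map_of_snd_map_eq_zero (hT : ∀ z, ‖T z‖ = ‖z‖) {z : E} (hz : (T z).snd = 0)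
    (w : E) : (inner ℝ (T z).fst (T w).fst : ℝ) = inner ℝ z w := by
  simpa [WithLp.prod_inner_apply, hz] using inner_map_map_of_norm_map hT z w

end IsometryIntoProd

lemma eq_zero_and_eq_zero_of_norm_sq_add {E F G H : Type*} [NormedAddCommGroup E]
    [NormedAddCommGroup F] [NormedAddCommGroup G] [NormedAddCommGroup H]
    {x : E} {y : F} {p : G} {q : H}
    (hx : ‖p‖ ^ 2 + ‖y‖ ^ 2 = ‖x‖ ^ 2) (hy : ‖x‖ ^ 2 + ‖q‖ ^ 2 = ‖y‖ ^ 2) : p = 0 ∧ q = 0 := by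
  have hpq : ‖p‖ ^ 2 + ‖q‖ ^ 2 = 0 := by linarith
  rw [add_eq_zero_iff_of_nonneg (by positivity) (by positivity)] at hpq
  simpa using hpq

theorem kernel_perp_ranges_general
    {V0p V0m V1p V1m V2p V2m : Type*}
    [NormedAddCommGroup V0p] [InnerProductSpace ℝ V0p]
    [NormedAddCommGroup V0m] [InnerProductSpace ℝ V0m]
    [NormedAddCommGroup V1p] [InnerProductSpace ℝ V1p]
    [NormedAddCommGroup V1m] [InnerProductSpace ℝ V1m]
    [NormedAddCommGroup V2p] [InnerProductSpace ℝ V2p]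
    [NormedAddCommGroup V2m] [InnerProductSpace ℝ V2m]
    (u : WithLp 2 (V0m × V1p) →L[ℝ] WithLp 2 (V0p × V1m))
    (v : WithLp 2 (V1m × V2p) →L[ℝ] WithLp 2 (V1p × V2m))
    (u00 : V0m →L[ℝ] V0p) (u01 : V1p →L[ℝ] V0p) (u10 : V0m →L[ℝ] V1m) (u11 : V1p →L[ℝ] V1m)
    (v11 : V1m →L[ℝ] V1p) (v12 : V2p →L[ℝ] V1p) (v21 : V1m →L[ℝ] V2m) (v22 : V2p →L[ℝ] V2m)
    (hub : ∀ x : WithLp 2 (V0m × V1p),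
      u x = p2 (u00 x.fst + u01 x.snd) (u10 x.fst + u11 x.snd))
    (hvb : ∀ y : WithLp 2 (V1m × V2p),
      v y = p2 (v11 y.fst + v12 y.snd) (v21 y.fst + v22 y.snd))
    (hu : IsUnitaryOp u) (hv : IsUnitaryOp v) :
    (∀ x : V1p, v11 (u11 x) = x →
      ∀ (a : V2p) (b : V0m), (inner ℝ x (v12 a + v11 (u10 b)) : ℝ) = 0) ∧
    (∀ y : V1m, u11 (v11 y) = y →
      ∀ (b : V0m) (a : V2p), (inner ℝ y (u10 b + u11 (v12 a)) : ℝ) = 0) := by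
  have hu_col (x : V1p) : ‖u01 x‖ ^ 2 + ‖u11 x‖ ^ 2 = ‖x‖ ^ 2 := by
    simpa [hub, WithLp.prod_norm_sq_eq_of_L2] using
      norm_fst_sq_add_norm_snd_sq_of_norm_map hu.1 (p2 0 x)
  have hv_col (y : V1m) : ‖v11 y‖ ^ 2 + ‖v21 y‖ ^ 2 = ‖y‖ ^ 2 := by
    simpa [hvb, WithLp.prod_norm_sq_eq_of_L2] using
      norm_fst_sq_add_norm_snd_sq_of_norm_map hv.1 (p2 y 0)
  have hu_inner {x : V1p} (hx : u01 x = 0) (b : V0m) (x' : V1p) :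
      (inner ℝ (u11 x) (u10 b + u11 x') : ℝ) = inner ℝ x x' := by
    simpa [hub, WithLp.prod_inner_apply] using
      inner_snd_map_of_fst_map_eq_zero hu.1 (z := p2 0 x) (by simpa [hub] using hx) (p2 b x')
  have hv_inner {y : V1m} (hy : v21 y = 0) (y' : V1m) (a : V2p) :
      (inner ℝ (v11 y) (v11 y' + v12 a) : ℝ) = inner ℝ y y' := by
    simpa [hvb, WithLp.prod_inner_apply] using
      inner_fst_map_of_snd_map_eq_zero hv.1 (z := p2 y 0) (by simpa [hvb] using hy) (p2 y' a)
  have kernel {x : V1p} (hx : v11 (u11 x) = x) : u01 x = 0 ∧ v21 (u11 x) = 0 :=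
    eq_zero_and_eq_zero_of_norm_sq_add (hu_col x) (by simpa [hx] using hv_col (u11 x))
  refine ⟨fun x hx a b => ?_, fun y hy b a => ?_⟩
  · obtain ⟨hu01, hv21⟩ := kernel hx
    calc (inner ℝ x (v12 a + v11 (u10 b)) : ℝ)
        = inner ℝ (v11 (u11 x)) (v11 (u10 b) + v12 a) := by rw [hx, add_comm]
      _ = inner ℝ (u11 x) (u10 b + u11 0) := by rw [hv_inner hv21, map_zero, add_zero]
      _ = 0 := by rw [hu_inner hu01, inner_zero_right]
  · obtain ⟨hu01, hv21⟩ := kernel (x := v11 y) (by rw [hy])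
    rw [hy] at hv21
    calc (inner ℝ y (u10 b + u11 (v12 a)) : ℝ)
        = inner ℝ (u11 (v11 y)) (u10 b + u11 (v12 a)) := by rw [hy]
      _ = inner ℝ (v11 y) (v11 0 + v12 a) := by rw [hu_inner hu01, map_zero, zero_add]
      _ = 0 := by rw [hv_inner hv21, inner_zero_right]

/-- With `L₀₁ = graph(u)`, `L₁₂ = graph(v)` as above,
`ker(1 - v₁₁u₁₁) ⊥ (ran v₁₂ + ran(v₁₁u₁₀))` and
`ker(1 - u₁₁v₁₁) ⊥ (ran u₁₀ + ran(u₁₁v₁₂))`. -/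
theorem kernel_perp_ranges
    {V0p V0m V1p V1m V2p V2m : Type*}
    [NormedAddCommGroup V0p] [InnerProductSpace ℝ V0p] [CompleteSpace V0p]
    [NormedAddCommGroup V0m] [InnerProductSpace ℝ V0m] [CompleteSpace V0m]
    [NormedAddCommGroup V1p] [InnerProductSpace ℝ V1p] [CompleteSpace V1p]
    [NormedAddCommGroup V1m] [InnerProductSpace ℝ V1m] [CompleteSpace V1m]
    [NormedAddCommGroup V2p] [InnerProductSpace ℝ V2p] [CompleteSpace V2p]
    [NormedAddCommGroup V2m] [InnerProductSpace ℝ V2m] [CompleteSpace V2m]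
    (u : WithLp 2 (V0m × V1p) →L[ℝ] WithLp 2 (V0p × V1m))
    (v : WithLp 2 (V1m × V2p) →L[ℝ] WithLp 2 (V1p × V2m))
    (u00 : V0m →L[ℝ] V0p) (u01 : V1p →L[ℝ] V0p) (u10 : V0m →L[ℝ] V1m) (u11 : V1p →L[ℝ] V1m)
    (v11 : V1m →L[ℝ] V1p) (v12 : V2p →L[ℝ] V1p) (v21 : V1m →L[ℝ] V2m) (v22 : V2p →L[ℝ] V2m)
    (hub : ∀ x : WithLp 2 (V0m × V1p),
      u x = p2 (u00 x.fst + u01 x.snd) (u10 x.fst + u11 x.snd))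
    (hvb : ∀ y : WithLp 2 (V1m × V2p),
      v y = p2 (v11 y.fst + v12 y.snd) (v21 y.fst + v22 y.snd))
    (hu : IsUnitaryOp u) (hv : IsUnitaryOp v) :
    (∀ x : V1p, v11 (u11 x) = x →
      ∀ (a : V2p) (b : V0m), (inner ℝ x (v12 a + v11 (u10 b)) : ℝ) = 0) ∧
    (∀ y : V1m, u11 (v11 y) = y →
      ∀ (b : V0m) (a : V2p), (inner ℝ y (u10 b + u11 (v12 a)) : ℝ) = 0) :=
  kernel_perp_ranges_general u v u00 u01 u10 u11 v11 v12 v21 v22 hub hvb hu hv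
end
end
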